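/- Let γ be convex, positively homogeneous of degree one, and C¹ away from 0. Then for all nonzero h, ĥ ∈ ℝ², with n̂ = −ĥ^⊥/|ĥ|, one has γ(−ĥ^⊥) − γ(−h^⊥) ≤ (Z_k(n̂) ĥ/|ĥ|) · (ĥ − h) for any choice of the stabilizing function k(n̂), where Z_k(n) = γ(n)I₂ − n∇γ(n)ᵀ − ∇γ(n)nᵀ + k(n)nnᵀ. -/

import Mathlib

open scoped RealInnerProductSpace
noncomputable section
abbrev E := EuclideanSpace ℝ (Fin 2)
def toE (v : Fin 2 → ℝ) : E := (WithLp.equiv 2 (Fin 2 → ℝ)).symm v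
def toV (p : E) : Fin 2 → ℝ := fun i => p i
/-- clockwise rotation by π/2 : (a,b)^⊥ = (b,-a) -/
def perp (p : E) : E := toE ![p 1, -(p 0)]

/-- symmetrized surface energy matrix Z_k(n) = γ(n)I₂ − n∇γ(n)ᵀ − ∇γ(n)nᵀ + k nnᵀ -/
def Zmat (γ : E → ℝ) (k : ℝ) (n : E) : Matrix (Fin 2) (Fin 2) ℝ :=
  γ n • (1 : Matrix (Fin 2) (Fin 2) ℝ)
    - Matrix.vecMulVec (toV n) (toV (gradient γ n))
    - Matrix.vecMulVec (toV (gradient γ n)) (toV n)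
    + k • Matrix.vecMulVec (toV n) (toV n)

/-! Put `τ = ĥ/|ĥ|` and `n̂ = -τ^⊥`, an orthonormal pair. The supporting-hyperplane inequality
along the ray through `n̂` forces Euler's identity `γ(n̂) = ∇γ(n̂)·n̂`, and then
`Z_k(n̂)τ = γ(n̂)τ - (∇γ(n̂)·τ)n̂ = ∇γ(n̂)^⊥` (the `k`-term vanishes since `n̂ ⊥ τ`). As `^⊥` is a
rotation, `∇γ(n̂)^⊥·(ĥ - h) = ∇γ(n̂)·(-ĥ^⊥ + h^⊥)`, so the estimate is the supporting-hyperplane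
inequality at `n̂`, transported to `-ĥ^⊥ = |ĥ| n̂` by homogeneity. -/

@[simp] lemma perp_apply_zero (p : E) : perp p 0 = p 1 := rfl
@[simp] lemma perp_apply_one (p : E) : perp p 1 = -p 0 := rfl
@[simp] lemma toV_apply (p : E) (i : Fin 2) : toV p i = p i := rfl
@[simp] lemma toE_apply (v : Fin 2 → ℝ) (i : Fin 2) : toE v i = v i := rfl

lemma perp_smul (c : ℝ) (p : E) : perp (c • p) = c • perp p := by
  ext i; fin_cases i <;> simp

lemma perp_sub (p q : E) : perp (p - q) = perp p - perp q := by
  ext i; fin_cases i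
  · simp
  · simp; ring

lemma perp_ne_zero {p : E} (hp : p ≠ 0) : perp p ≠ 0 := by
  contrapose! hp
  ext i; fin_cases i
  · simpa using congrArg (· 1) hp
  · simpa using congrArg (· 0) hp

lemma inner_perp_left (p q : E) : ⟪perp p, q⟫ = ⟪p, -perp q⟫ := by
  simp [PiLp.inner_apply, Fin.sum_univ_two]

lemma inner_perp_self (p : E) : ⟪p, perp p⟫ = 0 := by
  simp [PiLp.inner_apply, Fin.sum_univ_two]; ring

lemma perp_eq_of_norm_eq_one {t : E} (ht : ‖t‖ = 1) (g : E) :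
    perp g = ⟪g, -perp t⟫ • t - ⟪g, t⟫ • -perp t := by
  have hsq : t 0 ^ 2 + t 1 ^ 2 = 1 := by
    have := real_inner_self_eq_norm_mul_norm t
    rw [ht, PiLp.inner_apply] at this
    simpa [Fin.sum_univ_two, mul_comm] using this
  ext i; fin_cases i <;> simp [PiLp.inner_apply, Fin.sum_univ_two]
  · linear_combination (-g 1) * hsq
  · linear_combination g 0 * hsq

lemma Zmat_mulVec (γ : E → ℝ) (k : ℝ) (n v : E) :
    toE ((Zmat γ k n).mulVec (toV v)) =
      γ n • v - ⟪gradient γ n, v⟫ • n - ⟪n, v⟫ • gradient γ n + (k * ⟪n, v⟫) • n := by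
  unfold Zmat
  set g := gradient γ n
  ext i; fin_cases i <;>
    simp [Fin.sum_univ_two, PiLp.inner_apply, Matrix.vecMulVec_apply] <;>
    ring

lemma Zmat_mulVec_eq_perp_gradient (γ : E → ℝ) (k : ℝ) {τ : E} (hτ : ‖τ‖ = 1)
    (heuler : γ (-perp τ) = ⟪gradient γ (-perp τ), -perp τ⟫) :
    toE ((Zmat γ k (-perp τ)).mulVec (toV τ)) = perp (gradient γ (-perp τ)) := by
  have hnτ : ⟪-perp τ, τ⟫ = 0 := by
    rw [inner_neg_left, real_inner_comm, inner_perp_self, neg_zero]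
  rw [Zmat_mulVec, hnτ, heuler, perp_eq_of_norm_eq_one hτ (gradient γ (-perp τ))]
  simp

section Homogeneous

variable {F : Type*} [NormedAddCommGroup F] [InnerProductSpace ℝ F] {γ : F → ℝ}

lemma eq_inner_of_subgradient_of_homogeneous
    (hhom : ∀ l : ℝ, 0 < l → ∀ p : F, γ (l • p) = l * γ p) {u g : F} (hu : u ≠ 0)
    (hsub : ∀ v, v ≠ 0 → γ u - γ v ≤ ⟪g, u - v⟫) :
    γ u = ⟪g, u⟫ := by
  have h2 := hsub ((2 : ℝ) • u) (smul_ne_zero two_ne_zero hu)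
  have h12 := hsub ((2⁻¹ : ℝ) • u) (smul_ne_zero (by norm_num) hu)
  rw [hhom 2 two_pos, show u - (2 : ℝ) • u = (-1 : ℝ) • u by module, real_inner_smul_right] at h2
  rw [hhom 2⁻¹ (by norm_num), show u - (2⁻¹ : ℝ) • u = (2⁻¹ : ℝ) • u by module,
    real_inner_smul_right] at h12
  linarith

lemma subgradient_smul_of_homogeneous
    (hhom : ∀ l : ℝ, 0 < l → ∀ p : F, γ (l • p) = l * γ p) {u g : F}
    (hsub : ∀ v, v ≠ 0 → γ u - γ v ≤ ⟪g, u - v⟫) {l : ℝ} (hl : 0 < l) {v : F} (hv : v ≠ 0) :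
    γ (l • u) - γ v ≤ ⟪g, l • u - v⟫ := by
  have key := hsub (l⁻¹ • v) (smul_ne_zero (inv_ne_zero hl.ne') hv)
  have hv' : v = l • l⁻¹ • v := (smul_inv_smul₀ hl.ne' v).symm
  rw [hv', hhom l hl, hhom l hl, ← smul_sub, real_inner_smul_right, ← mul_sub]
  exact mul_le_mul_of_nonneg_left key hl.le

end Homogeneous

theorem convexity_estimate_Zmat_general (γ : E → ℝ)
    (hhom : ∀ l : ℝ, 0 < l → ∀ p : E, γ (l • p) = l * γ p)
    (hconv : ∀ u v : E, u ≠ 0 → v ≠ 0 → γ u - γ v ≤ ⟪gradient γ u, u - v⟫)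
    (h hh : E) (hh0 : h ≠ 0) (hhh0 : hh ≠ 0) (k : ℝ) :
    γ (-perp hh) - γ (-perp h)
      ≤ ⟪toE ((Zmat γ k (‖hh‖⁻¹ • (-perp hh))).mulVec (toV (‖hh‖⁻¹ • hh))), hh - h⟫ := by
  set τ : E := ‖hh‖⁻¹ • hh
  have hτ : ‖τ‖ = 1 := norm_smul_inv_norm hhh0
  have hn : ‖hh‖⁻¹ • -perp hh = -perp τ := by rw [perp_smul, smul_neg]
  have hn0 : -perp τ ≠ 0 := neg_ne_zero.mpr (perp_ne_zero (norm_ne_zero_iff.mp (by simp [hτ])))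
  have hhh : -perp hh = ‖hh‖ • -perp τ := by
    rw [← hn, smul_inv_smul₀ (norm_ne_zero_iff.mpr hhh0)]
  have hdiff : -perp (hh - h) = -perp hh - -perp h := by rw [perp_sub]; abel
  have hsub := fun v => hconv (-perp τ) v hn0
  have heuler := eq_inner_of_subgradient_of_homogeneous hhom hn0 hsub
  rw [hn, Zmat_mulVec_eq_perp_gradient γ k hτ heuler, inner_perp_left, hdiff, hhh]
  exact subgradient_smul_of_homogeneous hhom hsub (norm_pos_iff.mpr hhh0)
    (neg_ne_zero.mpr (perp_ne_zero hh0))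

/-- Convexity estimate in terms of Z_k(n̂), for any stabilizing value k. -/
theorem convexity_estimate_Zmat (γ : E → ℝ)
    (hhom : ∀ l : ℝ, 0 < l → ∀ p : E, γ (l • p) = l * γ p)
    (hdiff : ∀ p : E, p ≠ 0 → DifferentiableAt ℝ γ p)
    (hconv : ∀ u v : E, u ≠ 0 → v ≠ 0 → γ u - γ v ≤ ⟪gradient γ u, u - v⟫)
    (h hh : E) (hh0 : h ≠ 0) (hhh0 : hh ≠ 0) (k : ℝ) :
    γ (-perp hh) - γ (-perp h)
      ≤ ⟪toE ((Zmat γ k (‖hh‖⁻¹ • (-perp hh))).mulVec (toV (‖hh‖⁻¹ • hh))), hh - h⟫ :=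
  convexity_estimate_Zmat_general γ hhom hconv h hh hh0 hhh0 k
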